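/- Let (s,t) be an edge with s<t and let C be a configuration in which the edge (s,t) is in a correct state. Then: (i) in every configuration reachable from C along any execution, the edge (s,t) is still in a correct state; (ii) if in C neither s nor t is eligible for any rule, then in C the edge (s,t) is in the updated correct state (You,2,2). -/
import Mathlib


/-!
Formal model of the self-stabilizing maximal-matching algorithm in the
link-register model under read/write atomicity.

Nodes form a finite simple graph `G` on a vertex type `V` whose linear order
plays the role of the distinct identifiers.  A configuration records, for each
node `u`, its pointer `p u : Option V` (`none` = null), its lock variable
`m u : Fin 3`, and for each (directed) link a register `r u v : RegFlag × Fin 3`.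
-/

inductive RegFlag where
  | Idle | You | Other
deriving DecidableEq

abbrev RegVal : Type := RegFlag × Fin 3

inductive Rule (V : Type) where
  | write (a : V)
  | seduction (a : V)
  | marriage (a : V)
  | increase
  | reset
deriving DecidableEq

structure Config (V : Type) where
  p : V → Option V
  m : V → Fin 3
  r : V → V → RegVal

variable {V : Type}

def correctRegisterValue [DecidableEq V] (C : Config V) (u a : V) : RegVal :=
  match C.p u with
  | none => (RegFlag.Idle, 0)
  | some b => if b = a then (RegFlag.You, C.m u) else (RegFlag.Other, C.m u)

def PRabandonment [LinearOrder V] (C : Config V) (u : V) : Prop :=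
  ∃ v, C.p u = some v ∧
    (((C.r v u).1 ≠ RegFlag.You ∧ (v < u ∨ C.m u ≠ 0)) ∨
     (C.r v u = (RegFlag.Other, 2) ∧ u < v))

def PRreset [LinearOrder V] (C : Config V) (u : V) : Prop :=
  ∃ v, C.p u = some v ∧ (C.r v u).1 = RegFlag.You ∧
    ((C.m u = 0 ∧ (C.r v u).2 = 2) ∨
     (C.m u = 2 ∧ (C.r v u).2 = 0) ∨
     (C.m u = 0 ∧ (C.r v u).2 = 1 ∧ v < u) ∨
     (C.m u = 1 ∧ (C.r v u).2 = 0 ∧ u < v) ∨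
     (C.m u = 1 ∧ (C.r v u).2 = 2 ∧ u < v) ∨
     (C.m u = 2 ∧ (C.r v u).2 = 1 ∧ v < u))

/-- The guard of each rule of node `u` in configuration `C`. -/
def eligible [LinearOrder V] (G : SimpleGraph V) (C : Config V) (u : V) : Rule V → Prop
  | .write a => G.Adj u a ∧ C.r u a ≠ correctRegisterValue C u a
  | .seduction a => G.Adj u a ∧ C.p u = none ∧ C.r u a = correctRegisterValue C u a ∧
      C.r a u = (RegFlag.Idle, 0) ∧ u < a
  | .marriage a => G.Adj u a ∧ C.p u = none ∧ C.r u a = correctRegisterValue C u a ∧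
      C.r a u = (RegFlag.You, 0) ∧ a < u
  | .increase => ∃ v, C.p u = some v ∧ C.r u v = correctRegisterValue C u v ∧
      (C.r v u).1 = RegFlag.You ∧
      ((C.m u = 0 ∧ ((u < v ∧ (C.r v u).2 = 1) ∨ (v < u ∧ (C.r v u).2 = 0))) ∨
       (C.m u = 1 ∧ ((u < v ∧ (C.r v u).2 = 1) ∨ (v < u ∧ (C.r v u).2 = 2))))
  | .reset => ∃ v, C.p u = some v ∧ C.r u v = correctRegisterValue C u v ∧
      (PRabandonment C u ∨ PRreset C u)

/-- Simultaneous application of (at most) one rule per node.  `A u = some R`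
means node `u` executes rule `R`; each action only modifies the data owned by
the acting node. -/
def step [DecidableEq V] (C : Config V) (A : V → Option (Rule V)) : Config V where
  p u :=
    match A u with
    | some (Rule.seduction a) => some a
    | some (Rule.marriage a) => some a
    | some Rule.reset => none
    | _ => C.p u
  m u :=
    match A u with
    | some (Rule.seduction _) => 0
    | some (Rule.marriage _) => 0
    | some Rule.reset => 0
    | some Rule.increase => C.m u + 1
    | _ => C.m u
  r u a :=
    match A u with
    | some (Rule.write b) => if a = b then correctRegisterValue C u a else C.r u a
    | _ => C.r u a

/-- An execution `C_0, A_0, C_1, A_1, …, C_T`: at each transition `i < T`, a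
nonempty set of eligible rules (at most one per node) is executed
simultaneously. -/
structure Execution [LinearOrder V] (G : SimpleGraph V) where
  T : ℕ
  conf : ℕ → Config V
  act : ℕ → V → Option (Rule V)
  act_nonempty : ∀ i < T, ∃ u, (act i u).isSome
  act_eligible : ∀ i < T, ∀ u R, act i u = some R → eligible G (conf i) u R
  conf_succ : ∀ i < T, conf (i + 1) = step (conf i) (act i)

/-- A configuration is stable if no rule is eligible at any node. -/
def stableConfig [LinearOrder V] (G : SimpleGraph V) (C : Config V) : Prop :=
  ∀ u R, ¬ eligible G C u R

/-- The edge `(s,t)` (with `s < t` intended) is in state `(You, α, β)`. -/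
def edgeState (C : Config V) (s t : V) (α β : Fin 3) : Prop :=
  C.p s = some t ∧ C.p t = some s ∧ C.m s = α ∧ C.m t = β

def updatedCorrectState (C : Config V) (s t : V) (α β : Fin 3) : Prop :=
  edgeState C s t α β ∧ C.r s t = (RegFlag.You, α) ∧ C.r t s = (RegFlag.You, β) ∧
    ((α, β) = ((0 : Fin 3), (0 : Fin 3)) ∨ (α, β) = (0, 1) ∨ (α, β) = (1, 1) ∨
     (α, β) = (2, 1) ∨ (α, β) = (2, 2))

def toUpdateCorrectState (C : Config V) (s t : V) (α β : Fin 3) : Prop :=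
  edgeState C s t α β ∧
    ((((α, β) = ((0 : Fin 3), (1 : Fin 3)) ∨ (α, β) = (2, 2)) ∧
        C.r s t = (RegFlag.You, α) ∧ C.r t s = (RegFlag.You, β - 1)) ∨
     (((α, β) = ((1 : Fin 3), (1 : Fin 3)) ∨ (α, β) = (2, 1)) ∧
        C.r s t = (RegFlag.You, α - 1) ∧ C.r t s = (RegFlag.You, β)))

def correctState (C : Config V) (s t : V) (α β : Fin 3) : Prop :=
  updatedCorrectState C s t α β ∨ toUpdateCorrectState C s t α β

/-- Node `u` executes a `v`-rule in transition `k`: one of `Write(v)`,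
`Seduction(v)`, `Marriage(v)`, a `v`-`Increase` or a `v`-`Reset`. -/
def execVRule [LinearOrder V] {G : SimpleGraph V} (E : Execution G) (k : ℕ) (u v : V) : Prop :=
  k < E.T ∧
    (E.act k u = some (Rule.write v) ∨ E.act k u = some (Rule.seduction v) ∨
     E.act k u = some (Rule.marriage v) ∨
     ((E.act k u = some Rule.increase ∨ E.act k u = some Rule.reset) ∧
       (E.conf k).p u = some v))

/-- The nine correct quadruples `(m_s, m_t, r_st.2, r_ts.2)`. -/
abbrev Quad (α β ρs ρt : Fin 3) : Prop :=
  (α, β, ρs, ρt) = (0, 0, 0, 0) ∨ (α, β, ρs, ρt) = (0, 1, 0, 1) ∨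
  (α, β, ρs, ρt) = (1, 1, 1, 1) ∨ (α, β, ρs, ρt) = (2, 1, 2, 1) ∨
  (α, β, ρs, ρt) = (2, 2, 2, 2) ∨ (α, β, ρs, ρt) = (0, 1, 0, 0) ∨
  (α, β, ρs, ρt) = (2, 2, 2, 1) ∨ (α, β, ρs, ρt) = (1, 1, 0, 1) ∨
  (α, β, ρs, ρt) = (2, 1, 1, 1)

set_option synthInstance.maxSize 5000

instance QuadDec (α β ρs ρt : Fin 3) : Decidable (Quad α β ρs ρt) := by
  unfold Quad; infer_instance

lemma quad_of_correct {C : Config V} {s t : V} {α β : Fin 3}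
    (h : correctState C s t α β) :
    C.p s = some t ∧ C.p t = some s ∧ C.m s = α ∧ C.m t = β ∧
      ∃ ρs ρt, C.r s t = (RegFlag.You, ρs) ∧ C.r t s = (RegFlag.You, ρt) ∧
        Quad α β ρs ρt := by
  rcases h with ⟨⟨h1, h2, h3, h4⟩, hrs, hrt, hp⟩ | ⟨⟨h1, h2, h3, h4⟩, hcase⟩
  · refine ⟨h1, h2, h3, h4, α, β, hrs, hrt, ?_⟩
    rcases hp with h | h | h | h | h <;>
      (rw [Prod.mk.injEq] at h; obtain ⟨rfl, rfl⟩ := h) <;> decide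
  · rcases hcase with ⟨hp, hrs, hrt⟩ | ⟨hp, hrs, hrt⟩
    · refine ⟨h1, h2, h3, h4, α, β - 1, hrs, hrt, ?_⟩
      rcases hp with h | h <;>
        (rw [Prod.mk.injEq] at h; obtain ⟨rfl, rfl⟩ := h) <;> decide
    · refine ⟨h1, h2, h3, h4, α - 1, β, hrs, hrt, ?_⟩
      rcases hp with h | h <;>
        (rw [Prod.mk.injEq] at h; obtain ⟨rfl, rfl⟩ := h) <;> decide

lemma correct_of_quad {C : Config V} {s t : V} {α β ρs ρt : Fin 3}
    (h1 : C.p s = some t) (h2 : C.p t = some s) (h3 : C.m s = α) (h4 : C.m t = β)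
    (hrs : C.r s t = (RegFlag.You, ρs)) (hrt : C.r t s = (RegFlag.You, ρt))
    (hQ : Quad α β ρs ρt) : correctState C s t α β := by
  have hE : edgeState C s t α β := ⟨h1, h2, h3, h4⟩
  rcases hQ with h | h | h | h | h | h | h | h | h <;>
      (simp only [Prod.mk.injEq] at h; obtain ⟨rfl, rfl, rfl, rfl⟩ := h)
  · exact Or.inl ⟨hE, hrs, hrt, by decide⟩
  · exact Or.inl ⟨hE, hrs, hrt, by decide⟩
  · exact Or.inl ⟨hE, hrs, hrt, by decide⟩
  · exact Or.inl ⟨hE, hrs, hrt, by decide⟩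
  · exact Or.inl ⟨hE, hrs, hrt, by decide⟩
  · exact Or.inr ⟨hE, Or.inl ⟨by decide, hrs, by rw [show ((1 : Fin 3) - 1) = 0 by decide]; exact hrt⟩⟩
  · exact Or.inr ⟨hE, Or.inl ⟨by decide, hrs, by rw [show ((2 : Fin 3) - 1) = 1 by decide]; exact hrt⟩⟩
  · exact Or.inr ⟨hE, Or.inr ⟨by decide, by rw [show ((1 : Fin 3) - 1) = 0 by decide]; exact hrs, hrt⟩⟩
  · exact Or.inr ⟨hE, Or.inr ⟨by decide, by rw [show ((2 : Fin 3) - 1) = 1 by decide]; exact hrs, hrt⟩⟩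

lemma resetS_contra : ∀ α β ρs ρt : Fin 3, Quad α β ρs ρt →
    ¬((α = 0 ∧ ρt = 2) ∨ (α = 2 ∧ ρt = 0) ∨ (α = 1 ∧ ρt = 0) ∨ (α = 1 ∧ ρt = 2)) := by
  decide

lemma resetT_contra : ∀ α β ρs ρt : Fin 3, Quad α β ρs ρt →
    ¬((β = 0 ∧ ρs = 2) ∨ (β = 2 ∧ ρs = 0) ∨ (β = 0 ∧ ρs = 1) ∨ (β = 2 ∧ ρs = 1)) := by
  decide

lemma key_quad : ∀ α β ρs ρt α' β' ρs' ρt' : Fin 3, Quad α β ρs ρt →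
    ((α' = α ∧ ρs' = ρs) ∨ (α' = α ∧ ρs' = α ∧ ¬ρs = α) ∨
      (α' = α + 1 ∧ ρs' = ρs ∧ ρs = α ∧ ρt = 1 ∧ (α = 0 ∨ α = 1))) →
    ((β' = β ∧ ρt' = ρt) ∨ (β' = β ∧ ρt' = β ∧ ¬ρt = β) ∨
      (β' = β + 1 ∧ ρt' = ρt ∧ ρt = β ∧ ((β = 0 ∧ ρs = 0) ∨ (β = 1 ∧ ρs = 2)))) →
    Quad α' β' ρs' ρt' := by
  decide

lemma stable_quad : ∀ α β : Fin 3, Quad α β α β →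
    ¬((α = 0 ∧ β = 1) ∨ (α = 1 ∧ β = 1)) →
    ¬((β = 0 ∧ α = 0) ∨ (β = 1 ∧ α = 2)) → α = 2 ∧ β = 2 := by
  decide

lemma step_preserves [LinearOrder V] {G : SimpleGraph V} {D : Config V}
    {A : V → Option (Rule V)}
    (hel : ∀ u R, A u = some R → eligible G D u R)
    {s t : V} (hst : s < t) {α β : Fin 3}
    (h : correctState D s t α β) :
    ∃ α' β', correctState (step D A) s t α' β' := by
  obtain ⟨h1, h2, h3, h4, ρs, ρt, hrs, hrt, hQ⟩ := quad_of_correct h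
  have hns : ¬ t < s := asymm hst
  have hcs : correctRegisterValue D s t = (RegFlag.You, α) := by
    simp [correctRegisterValue, h1, h3]
  have hct : correctRegisterValue D t s = (RegFlag.You, β) := by
    simp [correctRegisterValue, h2, h4]
  have Hs : (step D A).p s = some t ∧ ∃ α' ρs', (step D A).m s = α' ∧
      (step D A).r s t = (RegFlag.You, ρs') ∧
      ((α' = α ∧ ρs' = ρs) ∨ (α' = α ∧ ρs' = α ∧ ¬ρs = α) ∨
        (α' = α + 1 ∧ ρs' = ρs ∧ ρs = α ∧ ρt = 1 ∧ (α = 0 ∨ α = 1))) := by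
    cases hA : A s with
    | none =>
        refine ⟨?_, α, ρs, ?_, ?_, Or.inl ⟨rfl, rfl⟩⟩ <;> simp [step, hA, h1, h3, hrs]
    | some R =>
      cases R with
      | write b =>
          by_cases hb : t = b
          · subst hb
            obtain ⟨-, hne⟩ := hel s _ hA
            rw [hrs, hcs] at hne
            have hne' : ¬ρs = α := fun hh => hne (by rw [hh])
            refine ⟨?_, α, α, ?_, ?_, Or.inr (Or.inl ⟨rfl, rfl, hne'⟩)⟩ <;>
              simp [step, hA, h1, h3, hcs]
          · refine ⟨?_, α, ρs, ?_, ?_, Or.inl ⟨rfl, rfl⟩⟩ <;>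
              simp [step, hA, h1, h3, hrs, hb]
      | seduction b =>
          obtain ⟨-, hnone, -⟩ := hel s _ hA
          rw [h1] at hnone; exact absurd hnone (by simp)
      | marriage b =>
          obtain ⟨-, hnone, -⟩ := hel s _ hA
          rw [h1] at hnone; exact absurd hnone (by simp)
      | increase =>
          obtain ⟨v, hv, hcorr, -, hcond⟩ := hel s _ hA
          rw [h1] at hv
          obtain rfl : v = t := (Option.some.inj hv).symm
          rw [hrs, hcs] at hcorr
          have hρsα : ρs = α := congrArg Prod.snd hcorr
          rw [h3, hrt] at hcond
          have hcond' : ρt = 1 ∧ (α = 0 ∨ α = 1) := by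
            rcases hcond with ⟨ha, hb | hb⟩ | ⟨ha, hb | hb⟩
            · exact ⟨hb.2, Or.inl ha⟩
            · exact absurd hb.1 hns
            · exact ⟨hb.2, Or.inr ha⟩
            · exact absurd hb.1 hns
          refine ⟨?_, α + 1, ρs, ?_, ?_,
            Or.inr (Or.inr ⟨rfl, rfl, hρsα, hcond'.1, hcond'.2⟩)⟩ <;>
            simp [step, hA, h1, h3, hrs]
      | reset =>
          exfalso
          obtain ⟨v, hv, -, hPR⟩ := hel s _ hA
          rcases hPR with ⟨v', hv', hc⟩ | ⟨v', hv', -, hconds⟩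
          · rw [h1] at hv'
            obtain rfl : v' = t := (Option.some.inj hv').symm
            rcases hc with ⟨hc1, -⟩ | ⟨hc2, -⟩
            · rw [hrt] at hc1; exact hc1 rfl
            · rw [hrt] at hc2
              exact RegFlag.noConfusion (congrArg Prod.fst hc2)
          · rw [h1] at hv'
            obtain rfl : v' = t := (Option.some.inj hv').symm
            rw [h3, hrt] at hconds
            refine resetS_contra α β ρs ρt hQ ?_
            rcases hconds with h' | h' | h' | h' | h' | h'
            · exact Or.inl ⟨h'.1, h'.2⟩
            · exact Or.inr (Or.inl ⟨h'.1, h'.2⟩)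
            · exact absurd h'.2.2 hns
            · exact Or.inr (Or.inr (Or.inl ⟨h'.1, h'.2.1⟩))
            · exact Or.inr (Or.inr (Or.inr ⟨h'.1, h'.2.1⟩))
            · exact absurd h'.2.2 hns
  have Ht : (step D A).p t = some s ∧ ∃ β' ρt', (step D A).m t = β' ∧
      (step D A).r t s = (RegFlag.You, ρt') ∧
      ((β' = β ∧ ρt' = ρt) ∨ (β' = β ∧ ρt' = β ∧ ¬ρt = β) ∨
        (β' = β + 1 ∧ ρt' = ρt ∧ ρt = β ∧ ((β = 0 ∧ ρs = 0) ∨ (β = 1 ∧ ρs = 2)))) := by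
    cases hA : A t with
    | none =>
        refine ⟨?_, β, ρt, ?_, ?_, Or.inl ⟨rfl, rfl⟩⟩ <;> simp [step, hA, h2, h4, hrt]
    | some R =>
      cases R with
      | write b =>
          by_cases hb : s = b
          · subst hb
            obtain ⟨-, hne⟩ := hel t _ hA
            rw [hrt, hct] at hne
            have hne' : ¬ρt = β := fun hh => hne (by rw [hh])
            refine ⟨?_, β, β, ?_, ?_, Or.inr (Or.inl ⟨rfl, rfl, hne'⟩)⟩ <;>
              simp [step, hA, h2, h4, hct]
          · refine ⟨?_, β, ρt, ?_, ?_, Or.inl ⟨rfl, rfl⟩⟩ <;>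
              simp [step, hA, h2, h4, hrt, hb]
      | seduction b =>
          obtain ⟨-, hnone, -⟩ := hel t _ hA
          rw [h2] at hnone; exact absurd hnone (by simp)
      | marriage b =>
          obtain ⟨-, hnone, -⟩ := hel t _ hA
          rw [h2] at hnone; exact absurd hnone (by simp)
      | increase =>
          obtain ⟨v, hv, hcorr, -, hcond⟩ := hel t _ hA
          rw [h2] at hv
          obtain rfl : v = s := (Option.some.inj hv).symm
          rw [hrt, hct] at hcorr
          have hρtβ : ρt = β := congrArg Prod.snd hcorr
          rw [h4, hrs] at hcond
          have hcond' : (β = 0 ∧ ρs = 0) ∨ (β = 1 ∧ ρs = 2) := by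
            rcases hcond with ⟨ha, hb | hb⟩ | ⟨ha, hb | hb⟩
            · exact absurd hb.1 hns
            · exact Or.inl ⟨ha, hb.2⟩
            · exact absurd hb.1 hns
            · exact Or.inr ⟨ha, hb.2⟩
          refine ⟨?_, β + 1, ρt, ?_, ?_,
            Or.inr (Or.inr ⟨rfl, rfl, hρtβ, hcond'⟩)⟩ <;>
            simp [step, hA, h2, h4, hrt]
      | reset =>
          exfalso
          obtain ⟨v, hv, -, hPR⟩ := hel t _ hA
          rcases hPR with ⟨v', hv', hc⟩ | ⟨v', hv', -, hconds⟩
          · rw [h2] at hv'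
            obtain rfl : v' = s := (Option.some.inj hv').symm
            rcases hc with ⟨hc1, -⟩ | ⟨hc2, -⟩
            · rw [hrs] at hc1; exact hc1 rfl
            · rw [hrs] at hc2
              exact RegFlag.noConfusion (congrArg Prod.fst hc2)
          · rw [h2] at hv'
            obtain rfl : v' = s := (Option.some.inj hv').symm
            rw [h4, hrs] at hconds
            refine resetT_contra α β ρs ρt hQ ?_
            rcases hconds with h' | h' | h' | h' | h' | h'
            · exact Or.inl ⟨h'.1, h'.2⟩
            · exact Or.inr (Or.inl ⟨h'.1, h'.2⟩)
            · exact Or.inr (Or.inr (Or.inl ⟨h'.1, h'.2.1⟩))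
            · exact absurd h'.2.2 hns
            · exact absurd h'.2.2 hns
            · exact Or.inr (Or.inr (Or.inr ⟨h'.1, h'.2.1⟩))
  obtain ⟨hp1, α', ρs', hm1, hr1, hs1⟩ := Hs
  obtain ⟨hp2, β', ρt', hm2, hr2, hs2⟩ := Ht
  exact ⟨α', β', correct_of_quad hp1 hp2 hm1 hm2 hr1 hr2
    (key_quad α β ρs ρt α' β' ρs' ρt' hQ hs1 hs2)⟩

/-- If edge `(s,t)` (with `s < t`) is in a correct state in
`C`, then (i) along any execution every configuration reachable from `C` keeps
the edge in a correct state, and (ii) if neither `s` nor `t` is eligible for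
any rule in `C`, the edge is in the updated correct state `(You,2,2)` in `C`. -/
theorem stmt_4 {V : Type} [Fintype V] [LinearOrder V] (G : SimpleGraph V)
    (s t : V) (hadj : G.Adj s t) (hst : s < t) (C : Config V)
    (h : ∃ α β, correctState C s t α β) :
    (∀ (E : Execution G) (i j : ℕ), E.conf i = C → i ≤ j → j ≤ E.T →
        ∃ α β, correctState (E.conf j) s t α β) ∧
    ((∀ R, ¬ eligible G C s R) → (∀ R, ¬ eligible G C t R) →
        updatedCorrectState C s t 2 2) := by
  constructor
  · intro E i j hCi hij
    induction j, hij using Nat.le_induction with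
    | base => intro _; rw [hCi]; exact h
    | succ k hk ih =>
        intro hkT
        have hkT' : k < E.T := lt_of_lt_of_le (Nat.lt_succ_self k) hkT
        obtain ⟨α, β, hprev⟩ := ih hkT'.le
        rw [E.conf_succ k hkT']
        exact step_preserves (fun u R hu => E.act_eligible k hkT' u R hu) hst hprev
  · intro hNs hNt
    obtain ⟨α, β, hc⟩ := h
    obtain ⟨h1, h2, h3, h4, ρs, ρt, hrs, hrt, hQ⟩ := quad_of_correct hc
    have hns : ¬ t < s := asymm hst
    have hcs : correctRegisterValue C s t = (RegFlag.You, α) := by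
      simp [correctRegisterValue, h1, h3]
    have hct : correctRegisterValue C t s = (RegFlag.You, β) := by
      simp [correctRegisterValue, h2, h4]
    have hrs' : C.r s t = correctRegisterValue C s t := by
      by_contra hh; exact hNs (Rule.write t) ⟨hadj, hh⟩
    have hrt' : C.r t s = correctRegisterValue C t s := by
      by_contra hh; exact hNt (Rule.write s) ⟨hadj.symm, hh⟩
    have hρs : ρs = α := by
      have := hrs.symm.trans (hrs'.trans hcs)
      exact congrArg Prod.snd this
    have hρt : ρt = β := by
      have := hrt.symm.trans (hrt'.trans hct)
      exact congrArg Prod.snd this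
    rw [hρs] at hrs; rw [hρt] at hrt
    rw [hρs, hρt] at hQ
    have hIs : ¬((α = 0 ∧ β = 1) ∨ (α = 1 ∧ β = 1)) := by
      intro hcnd
      apply hNs Rule.increase
      refine ⟨t, h1, hrs', by rw [hrt], ?_⟩
      rw [h3, hrt]
      rcases hcnd with ⟨ha, hb⟩ | ⟨ha, hb⟩
      · exact Or.inl ⟨ha, Or.inl ⟨hst, hb⟩⟩
      · exact Or.inr ⟨ha, Or.inl ⟨hst, hb⟩⟩
    have hIt : ¬((β = 0 ∧ α = 0) ∨ (β = 1 ∧ α = 2)) := by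
      intro hcnd
      apply hNt Rule.increase
      refine ⟨s, h2, hrt', by rw [hrs], ?_⟩
      rw [h4, hrs]
      rcases hcnd with ⟨ha, hb⟩ | ⟨ha, hb⟩
      · exact Or.inl ⟨ha, Or.inr ⟨hst, hb⟩⟩
      · exact Or.inr ⟨ha, Or.inr ⟨hst, hb⟩⟩
    obtain ⟨rfl, rfl⟩ := stable_quad α β hQ hIs hIt
    exact ⟨⟨h1, h2, h3, h4⟩, hrs, hrt, Or.inr (Or.inr (Or.inr (Or.inr rfl)))⟩
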